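/- Let omega satisfy 1 + omega + omega^2 = 0 and let S_1(n), S_2(n), S_3(n) be as follows: S_1(n) = sum_{k in Z} q^{3k^2-k-3kn} [n choose 3k-n]_q, S_2(n) = q^{-n} sum_{k in Z} q^{3k^2+k-3kn} [n choose 3k+1-n]_q, S_3(n) = sum_{k in Z} q^{3k^2-k-3kn} [n choose 3k-1-n]_q. Then S_1(n) + omega*S_2(n) + omega^2*S_3(n) = (-1)^n q^{-C(n+1,2)} for all nonnegative integers n. -/

import Mathlib

/-- Gaussian binomial coefficient `[n choose r]_q`, defined via the q-Pascal
recurrence, with the convention that it is `0` when `r < 0` or `r > n`. -/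
def qbinom {K : Type*} [CommRing K] (q : K) : ℕ → ℤ → K
  | 0, r => if r = 0 then 1 else 0
  | n + 1, r => q ^ r.toNat * qbinom q n r + qbinom q n (r - 1)

/-!
Reversing the summation index, `k ↦ n - k`, and using the symmetry
`[n choose r]_q = [n choose n - r]_q` turns `S₂` into `S₃`, so by `1 + ω + ω² = 0` the left-hand
side is `S₁ - S₃`. Expanding `S₁ (n + 1)` with one q-Pascal rule and `S₃ (n + 1)` with the other
(after the shift `k ↦ k - 1`) produces the same extra sum in both, so `D n = S₁ n - S₃ n` satisfies
`D (n + 1) = -q ^ (-(n + 1)) * D n` with `D 0 = 1`.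
-/

section CommRing

variable {K : Type*} [CommRing K] (q : K)

theorem qbinom_zero (r : ℤ) : qbinom q 0 r = if r = 0 then 1 else 0 := rfl

theorem qbinom_eq_zero {n : ℕ} {r : ℤ} (h : r < 0 ∨ n < r) : qbinom q n r = 0 := by
  induction n generalizing r with
  | zero => exact if_neg (by omega)
  | succ n ih => rw [qbinom, ih (by omega), ih (by omega), mul_zero, add_zero]

theorem support_qbinom_subset (n : ℕ) : Function.support (qbinom q n) ⊆ Set.Icc 0 (n : ℤ) :=
  fun r hr => by
    by_contra h
    exact hr (qbinom_eq_zero q (by rw [Set.mem_Icc] at h; omega))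

@[fun_prop]
theorem hasFiniteSupport_qbinom_comp (n : ℕ) {g : ℤ → ℤ} (hg : Function.Injective g) :
    Function.HasFiniteSupport fun k => qbinom q n (g k) :=
  Function.HasFiniteSupport.fun_comp_of_injective hg <|
    (Set.finite_Icc 0 (n : ℤ)).subset (support_qbinom_subset q n)

end CommRing

section Field

variable {K : Type*} [Field K] (q : K)

theorem qbinom_succ (n : ℕ) (r : ℤ) :
    qbinom q (n + 1) r = q ^ r * qbinom q n r + qbinom q n (r - 1) := by
  rcases lt_or_ge r 0 with h | h
  · simp [qbinom_eq_zero q (Or.inl h), qbinom_eq_zero q (n := n) (r := r - 1) (by omega)]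
  · rw [qbinom, ← zpow_natCast, Int.toNat_of_nonneg h]

variable {q} (hq : q ≠ 0)
include hq

theorem qbinom_succ' (n : ℕ) (r : ℤ) :
    qbinom q (n + 1) r = qbinom q n r + q ^ ((n : ℤ) + 1 - r) * qbinom q n (r - 1) := by
  induction n generalizing r with
  | zero =>
    simp only [qbinom_succ, qbinom_zero]
    split_ifs <;> simp_all [sub_eq_zero]
  | succ n ih =>
    have e₁ : q ^ r * q ^ ((n : ℤ) + 1 - r) = q ^ ((n : ℤ) + 1) := by
      rw [← zpow_add₀ hq, add_sub_cancel]
    have e₂ : q ^ ((n : ℤ) + 1 + 1 - r) * q ^ (r - 1) = q ^ ((n : ℤ) + 1) := by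
      rw [← zpow_add₀ hq]; ring_nf
    -- both sides are expanded to level `n`; the cross terms both carry `q ^ (n + 1)`
    have ih' := ih (r - 1)
    rw [sub_sub_eq_add_sub] at ih'
    rw [qbinom_succ q (n + 1)]
    push_cast
    linear_combination q ^ r * ih r - qbinom_succ q n r + ih'
      - q ^ ((n : ℤ) + 1 + 1 - r) * qbinom_succ q n (r - 1) + qbinom q n (r - 1) * (e₁ - e₂)

theorem qbinom_symm (n : ℕ) (r : ℤ) : qbinom q n (n - r) = qbinom q n r := by
  induction n generalizing r with
  | zero => simp only [qbinom_zero, CharP.cast_eq_zero, zero_sub, neg_eq_zero]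
  | succ n ih =>
    have h₁ : ((n + 1 : ℕ) : ℤ) - r = n - (r - 1) := by push_cast; ring
    have h₂ : (n : ℤ) + 1 - (n - (r - 1)) = r := by ring
    rw [h₁, qbinom_succ' hq, h₂, sub_sub, sub_add_cancel, ih, ih, qbinom_succ]
    ring

end Field

namespace Trisection

variable {K : Type*} [Field K] (q : K) (n : ℕ)

noncomputable def S₁ : K := ∑ᶠ k : ℤ, q ^ (3 * k ^ 2 - k - 3 * k * n) * qbinom q n (3 * k - n)

noncomputable def S₂ : K :=
  q ^ (-(n : ℤ)) * ∑ᶠ k : ℤ, q ^ (3 * k ^ 2 + k - 3 * k * n) * qbinom q n (3 * k + 1 - n)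

noncomputable def S₃ : K :=
  ∑ᶠ k : ℤ, q ^ (3 * k ^ 2 - k - 3 * k * n) * qbinom q n (3 * k - 1 - n)

/-- The sum shared by the q-Pascal expansions of `S₁ (n + 1)` and `S₃ (n + 1)`. -/
noncomputable def T : K :=
  ∑ᶠ k : ℤ, q ^ (3 * k ^ 2 - k - 3 * k * (n + 1)) * qbinom q n (3 * k - n - 2)

theorem S₁_zero : S₁ q 0 = 1 := by
  rw [S₁, finsum_eq_single _ 0 fun k hk => by simp [qbinom_zero, hk]]
  simp [qbinom_zero]

theorem S₃_zero : S₃ q 0 = 0 := by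
  rw [S₃, finsum_eq_zero_of_forall_eq_zero fun k => ?_]
  rw [qbinom_zero, if_neg (by omega), mul_zero]

variable {q} (hq : q ≠ 0)
include hq

theorem S₂_eq_S₃ : S₂ q n = S₃ q n := by
  rw [S₂, mul_finsum, ← finsum_comp_equiv (Equiv.subLeft (n : ℤ))]
  refine finsum_congr fun k => ?_
  rw [Equiv.subLeft_apply, ← mul_assoc, ← zpow_add₀ hq, ← qbinom_symm hq]
  ring_nf

theorem S₁_succ : S₁ q (n + 1) = q ^ (-((n : ℤ) + 1)) * S₃ q n + T q n := by
  rw [S₁, S₃, T, mul_finsum, ← finsum_add_distrib ?_ ?_]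
  · refine finsum_congr fun k => ?_
    rw [Nat.cast_succ, qbinom_succ, mul_add, ← mul_assoc, ← mul_assoc, ← zpow_add₀ hq,
      ← zpow_add₀ hq]
    ring_nf
  all_goals fun_prop (disch := intro a b h; simp only at h; omega)

theorem S₃_succ : S₃ q (n + 1) = T q n + q ^ (-((n : ℤ) + 1)) * S₁ q n := by
  have shift : S₁ q n = ∑ᶠ k : ℤ, q ^ (3 * (k - 1) ^ 2 - (k - 1) - 3 * (k - 1) * n) *
      qbinom q n (3 * (k - 1) - n) := by
    rw [S₁, ← finsum_comp_equiv (Equiv.subRight (1 : ℤ))]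
    rfl
  rw [S₃, T, shift, mul_finsum, ← finsum_add_distrib ?_ ?_]
  · refine finsum_congr fun k => ?_
    rw [Nat.cast_succ, qbinom_succ' hq, mul_add, ← mul_assoc, ← mul_assoc, ← zpow_add₀ hq,
      ← zpow_add₀ hq]
    ring_nf
  all_goals fun_prop (disch := intro a b h; simp only at h; omega)

theorem S₁_sub_S₃ : S₁ q n - S₃ q n = (-1) ^ n * q ^ (-((n + 1).choose 2 : ℤ)) := by
  induction n with
  | zero => simp [S₁_zero, S₃_zero]
  | succ n ih =>
    have h : q ^ (-((n + 1 + 1).choose 2 : ℤ)) =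
        q ^ (-((n : ℤ) + 1)) * q ^ (-((n + 1).choose 2 : ℤ)) := by
      rw [Nat.choose_succ_succ', Nat.choose_one_right, ← zpow_add₀ hq]
      push_cast
      ring_nf
    rw [S₁_succ n hq, S₃_succ n hq, h, pow_succ]
    linear_combination -q ^ (-((n : ℤ) + 1)) * ih

end Trisection

theorem stmt_15 {K : Type*} [Field K] (q ω : K) (hq : q ≠ 0)
    (hω : 1 + ω + ω ^ 2 = 0) (n : ℕ) :
    (∑ᶠ k : ℤ, q ^ (3 * k ^ 2 - k - 3 * k * n) * qbinom q n (3 * k - n)) +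
      ω * (q ^ (-(n : ℤ)) *
        ∑ᶠ k : ℤ, q ^ (3 * k ^ 2 + k - 3 * k * n) * qbinom q n (3 * k + 1 - n)) +
      ω ^ 2 *
        (∑ᶠ k : ℤ, q ^ (3 * k ^ 2 - k - 3 * k * n) * qbinom q n (3 * k - 1 - n)) =
      (-1 : K) ^ n * q ^ (-((n + 1).choose 2 : ℤ)) := by
  change Trisection.S₁ q n + ω * Trisection.S₂ q n + ω ^ 2 * Trisection.S₃ q n = _
  rw [Trisection.S₂_eq_S₃ n hq]
  linear_combination Trisection.S₁_sub_S₃ n hq + Trisection.S₃ q n * hω
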